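/- For all integers k ≥ 0, n ≥ 0 and every fixed x ∈ ℝ, the k-th derivative of the Kravchuk polynomial with respect to a satisfies d^k/da^k K_n(x,a) = ∑_{i=0}^{n−k} K_i(x,a) · (k!/(n−i)!) · s(n−i, k), where the sum is empty (so the derivative is 0) when k > n. -/

import Mathlib

/-!
The generating function `∑ₙ Kₙ(x,a) zⁿ = (1 - z)^x (1 + z)^(a - x)` together with the
Chu–Vandermonde identity `(1 + z)^(a + h - x) = (1 + z)^(a - x) (1 + z)^h` gives the shift formula
`Kₙ(x, a + h) = ∑_{l ≤ n} K_l(x,a) C(h, n - l)`. As a function of `h`, `C(h, m)` is the polynomial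
`(h)ₘ / m!`, whose `k`-th derivative at `0` is `k! s(m,k) / m!`, and `s(m,k) = 0` for `m < k`.
-/

/-- Generalized binomial coefficient `C(t, k) = t(t-1)⋯(t-k+1)/k!` of a real number. -/
noncomputable def genBinom (t : ℝ) (k : ℕ) : ℝ :=
  (∏ j ∈ Finset.range k, (t - j)) / (Nat.factorial k)

/-- The binary Kravchuk polynomial `K_n(x,a) = ∑_{i=0}^n (-1)^i C(x,i) C(a-x, n-i)`. -/
noncomputable def K (n : ℕ) (x a : ℝ) : ℝ :=
  ∑ i ∈ Finset.range (n + 1), (-1 : ℝ) ^ i * genBinom x i * genBinom (a - x) (n - i)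

/-- Signed Stirling numbers of the first kind: `t(t-1)⋯(t-m+1) = ∑_k s(m,k) t^k`. -/
noncomputable def stirling1 (m k : ℕ) : ℝ := (descPochhammer ℝ m).coeff k

open Polynomial Finset
open scoped Nat

lemma genBinom_eq_eval (t : ℝ) (m : ℕ) :
    genBinom t m = ((m ! : ℝ)⁻¹ • descPochhammer ℝ m).eval t := by
  rw [genBinom, eval_smul, descPochhammer_eval_eq_prod_range, smul_eq_mul, inv_mul_eq_div]

lemma genBinom_eq_choose (t : ℝ) (m : ℕ) : genBinom t m = Ring.choose t m := by
  rw [Ring.choose_eq_smul, genBinom_eq_eval, eval_smul, ← aeval_eq_smeval, aeval_def,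
    ← eval_map, descPochhammer_map]

lemma stirling1_eq_zero_of_lt {m k : ℕ} (h : m < k) : stirling1 m k = 0 :=
  coeff_eq_zero_of_natDegree_lt (by rwa [descPochhammer_natDegree])

noncomputable def kravchukSeries (x a : ℝ) : PowerSeries ℝ :=
  PowerSeries.rescale (-1) (PowerSeries.binomialSeries ℝ x) * PowerSeries.binomialSeries ℝ (a - x)

lemma coeff_kravchukSeries (n : ℕ) (x a : ℝ) :
    PowerSeries.coeff n (kravchukSeries x a) = K n x a := by
  simp [kravchukSeries, K, PowerSeries.coeff_mul, Nat.sum_antidiagonal_eq_sum_range_succ_mk,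
    genBinom_eq_choose]

lemma kravchukSeries_add (x a h : ℝ) :
    kravchukSeries x (a + h) = kravchukSeries x a * PowerSeries.binomialSeries ℝ h := by
  rw [kravchukSeries, kravchukSeries, add_sub_right_comm, PowerSeries.binomialSeries_add, mul_assoc]

lemma K_add (n : ℕ) (x a h : ℝ) :
    K n x (a + h) = ∑ l ∈ range (n + 1), K l x a * genBinom h (n - l) := by
  rw [← coeff_kravchukSeries, kravchukSeries_add, PowerSeries.coeff_mul,
    Nat.sum_antidiagonal_eq_sum_range_succ_mk]
  simp [coeff_kravchukSeries, genBinom_eq_choose]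

section

variable {𝕜 : Type*} [NontriviallyNormedField 𝕜]

lemma iteratedDeriv_eval (p : 𝕜[X]) (k : ℕ) (t : 𝕜) :
    iteratedDeriv k (fun t => p.eval t) t = (derivative^[k] p).eval t := by
  induction k generalizing t with
  | zero => rfl
  | succ k ih =>
    rw [iteratedDeriv_succ, funext ih, Polynomial.deriv, Function.iterate_succ_apply']

lemma iteratedDeriv_eval_zero (p : 𝕜[X]) (k : ℕ) :
    iteratedDeriv k (fun t => p.eval t) 0 = k ! * p.coeff k := by
  rw [iteratedDeriv_eval, ← coeff_zero_eq_eval_zero, coeff_iterate_derivative, zero_add,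
    Nat.descFactorial_self, nsmul_eq_mul]

end

/-- `d^k/da^k K_n(x,a) = ∑_{i=0}^{n-k} K_i(x,a) (k!/(n-i)!) s(n-i,k)`
(the sum being empty when `k > n`). -/
theorem kravchuk_iterated_deriv_a (k n : ℕ) (x a : ℝ) :
    deriv^[k] (fun t : ℝ => K n x t) a
      = ∑ i ∈ Finset.range (n + 1 - k),
          K i x a * ((Nat.factorial k : ℝ) / (Nat.factorial (n - i))) * stirling1 (n - i) k := by
  set P : ℝ[X] := ∑ l ∈ range (n + 1), K l x a • ((n - l)! : ℝ)⁻¹ • descPochhammer ℝ (n - l)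
  have hK : (fun t => K n x t) = fun t => P.eval (t - a) := by
    ext t
    simpa [P, eval_finsetSum, genBinom_eq_eval] using K_add n x a (t - a)
  rw [← iteratedDeriv_eq_iterate, hK, iteratedDeriv_comp_sub_const k (fun t => P.eval t)]
  beta_reduce
  rw [sub_self, iteratedDeriv_eval_zero, finsetSum_coeff, mul_sum,
    ← sum_subset (range_subset_range.2 ((n + 1).sub_le k)) fun l hl hlk => ?vanish]
  · refine sum_congr rfl fun l _ => ?_
    rw [coeff_smul, coeff_smul, ← stirling1, smul_eq_mul, smul_eq_mul]
    ring
  case vanish =>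
    simp only [mem_range, not_lt] at hl hlk
    rw [coeff_smul, coeff_smul, ← stirling1, stirling1_eq_zero_of_lt (by omega), smul_zero,
      smul_zero, mul_zero]
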